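/- If v is a leaf of the spanning tree S in a bispanning graph with disjoint spanning trees S ⊔ T = E, incident to the unique S-edge e, then e admits a unique symmetric edge exchange: |D(S,e) ∩ C(T,e)| = 2. -/

import Mathlib

namespace MG

variable {V E : Type*}

/-- Two vertices are joined by an edge of `F`. -/
def Adj (ends : E → Sym2 V) (F : Set E) (u v : V) : Prop :=
  ∃ e ∈ F, ends e = s(u, v)

/-- Reachability using edges of `F`. -/
def Reach (ends : E → Sym2 V) (F : Set E) : V → V → Prop :=
  Relation.ReflTransGen (Adj ends F)

/-- The edge set `F` connects all vertices of the multigraph. -/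
def Conn (ends : E → Sym2 V) (F : Set E) : Prop :=
  ∀ u v : V, Reach ends F u v

/-- `F` is a spanning tree: it connects all vertices using exactly `|V| - 1` edges. -/
def IsSpanningTree (ends : E → Sym2 V) (F : Set E) : Prop :=
  Conn ends F ∧ Nat.card F = Nat.card V - 1

/-- The multigraph is bispanning: its edge set is the disjoint union of two spanning trees. -/
def Bispanning (ends : E → Sym2 V) : Prop :=
  ∃ S T : Set E, S ∪ T = Set.univ ∧ Disjoint S T ∧
    IsSpanningTree ends S ∧ IsSpanningTree ends T

/-- Degree of a vertex: number of incident edges. -/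
noncomputable def deg (ends : E → Sym2 V) (v : V) : ℕ :=
  Nat.card {e : E | v ∈ ends e}

/-- `C` is (the edge set of) a simple cycle: nonempty, connected, and every
incident vertex is incident to exactly two edges of `C`. -/
def IsCycle (ends : E → Sym2 V) (C : Set E) : Prop :=
  C.Nonempty ∧
  (∀ u v : V, (∃ e ∈ C, u ∈ ends e) → (∃ e ∈ C, v ∈ ends e) → Reach ends C u v) ∧
  (∀ v : V, (∃ e ∈ C, v ∈ ends e) → Nat.card {e : E | e ∈ C ∧ v ∈ ends e} = 2)

/-- Number of connected components when only edges of `F` are used. -/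
noncomputable def numComp (ends : E → Sym2 V) (F : Set E) : ℕ :=
  Nat.card (Quot (Reach ends F))

/-- `D` is an edge cut: removing it increases the number of components. -/
def IsEdgeCut (ends : E → Sym2 V) (D : Set E) : Prop :=
  numComp ends Set.univ < numComp ends Dᶜ

/-- A minimal edge cut: no proper subset is an edge cut. -/
def IsMinEdgeCut (ends : E → Sym2 V) (D : Set E) : Prop :=
  IsEdgeCut ends D ∧ ∀ D' : Set E, D' ⊂ D → ¬ IsEdgeCut ends D'

/-- `D` is the fundamental cut of the tree edge `e` of the spanning tree `F`:
the minimal edge cut contained in `(E \ F) + e`, which contains `e`. -/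
def IsFundCut (ends : E → Sym2 V) (F : Set E) (e : E) (D : Set E) : Prop :=
  D ⊆ insert e Fᶜ ∧ e ∈ D ∧ IsMinEdgeCut ends D

/-- `C` is the fundamental cycle of the non-tree edge `e` w.r.t. the spanning tree `F`:
the cycle contained in `F + e`, which contains `e`. -/
def IsFundCycle (ends : E → Sym2 V) (F : Set E) (e : E) (C : Set E) : Prop :=
  C ⊆ insert e F ∧ e ∈ C ∧ IsCycle ends C

end MG

/-!
Because `v` is a leaf of `S`, deleting its edge `e` leaves every other vertex connected by
`S - e`, which avoids `D(S,e)`. Hence the minimal cut `D(S,e)` separates `v` from the rest and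
consists exactly of the edges at `v`, and `D(S,e) ∩ C(T,e)` is the set of edges of the cycle
`C(T,e)` at `v`, of which there are two.
-/

namespace MG

variable {V E : Type*} {ends : E → Sym2 V} {F F' D : Set E} {u w x y : V}

instance : Std.Symm (Adj ends F) where
  symm _ _ := fun ⟨f, hf, h⟩ => ⟨f, hf, h.trans Sym2.eq_swap⟩

theorem Reach.symm (h : Reach ends F u w) : Reach ends F w u :=
  Std.Symm.symm (r := Relation.ReflTransGen (Adj ends F)) _ _ h

theorem Reach.mono (hFF' : F ⊆ F') (h : Reach ends F u w) : Reach ends F' u w :=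
  Relation.ReflTransGen.mono (fun _ _ ⟨f, hf, hab⟩ => ⟨f, hFF' hf, hab⟩) _ _ h

theorem Conn.mono (hFF' : F ⊆ F') (h : Conn ends F) : Conn ends F' :=
  fun u w => (h u w).mono hFF'

theorem reach_insert_eq {f : E} (hf : ends f = s(x, y)) (hxy : Reach ends F x y) :
    Reach ends (insert f F) = Reach ends F := by
  funext u w
  refine propext ⟨fun h => ?_, Reach.mono (Set.subset_insert f F)⟩
  induction h with
  | refl => exact .refl
  | tail _ hadj ih =>
    obtain ⟨g, hg | hg, hgpq⟩ := hadj
    · subst hg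
      rw [hf, Sym2.eq_iff] at hgpq
      rcases hgpq with ⟨rfl, rfl⟩ | ⟨rfl, rfl⟩
      · exact ih.trans hxy
      · exact ih.trans hxy.symm
    · exact ih.tail ⟨g, hg, hgpq⟩

theorem numComp_eq_one_of_conn [Nonempty V] (h : Conn ends F) : numComp ends F = 1 := by
  have : Subsingleton (Quot (Reach ends F)) :=
    ⟨fun a b => Quot.induction_on₂ a b fun u w => Quot.sound (h u w)⟩
  exact Nat.card_eq_one_iff_unique.mpr ⟨this, ⟨Quot.mk _ (Classical.arbitrary V)⟩⟩

theorem IsEdgeCut.not_conn_compl [Nonempty V] (hD : IsEdgeCut ends D) : ¬ Conn ends Dᶜ := by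
  intro h
  have hlt := hD
  rw [IsEdgeCut, numComp_eq_one_of_conn (h.mono (Set.subset_univ _)),
    numComp_eq_one_of_conn h] at hlt
  exact lt_irrefl 1 hlt

theorem IsMinEdgeCut.not_reach_compl {f : E} (hD : IsMinEdgeCut ends D) (hf : f ∈ D)
    (hfxy : ends f = s(x, y)) : ¬ Reach ends Dᶜ x y := by
  intro hxy
  have hcompl : (D \ {f})ᶜ = insert f Dᶜ := by
    rw [Set.compl_sdiff, Set.singleton_union]
  have hcut : IsEdgeCut ends (D \ {f}) := by
    have := hD.1
    unfold IsEdgeCut numComp at this ⊢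
    rwa [hcompl, reach_insert_eq hfxy hxy]
  exact hD.2 _ (Set.sdiff_singleton_ssubset.mpr hf) hcut

section Leaf

variable {v a : V} {e : E}

theorem mem_ends_of_leaf (hleaf : {e' : E | e' ∈ F ∧ v ∈ ends e'} = {e}) :
    v ∈ ends e :=
  ((Set.ext_iff.mp hleaf e).mpr rfl).2

theorem eq_of_leaf (hleaf : {e' : E | e' ∈ F ∧ v ∈ ends e'} = {e}) {f : E} (hf : f ∈ F)
    (hvf : v ∈ ends f) : f = e :=
  (Set.ext_iff.mp hleaf f).mp ⟨hf, hvf⟩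

/-- Moving the leaf `v` onto its neighbour `a` turns every `F`-walk into an `(F - e)`-walk. -/
theorem Reach.diff_leaf [DecidableEq V] (hleaf : {e' : E | e' ∈ F ∧ v ∈ ends e'} = {e})
    (hea : ends e = s(v, a)) (h : Reach ends F u w) :
    Reach ends (F \ {e}) (if u = v then a else u) (if w = v then a else w) := by
  induction h with
  | refl => exact .refl
  | @tail x y _ hadj ih =>
    obtain ⟨f, hfF, hfxy⟩ := hadj
    by_cases hfe : f = e
    · subst hfe
      rw [hea, Sym2.eq_iff] at hfxy
      rcases hfxy with ⟨rfl, rfl⟩ | ⟨rfl, rfl⟩ <;> simpa using ih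
    · have hxv : x ≠ v := by
        rintro rfl
        exact hfe (eq_of_leaf hleaf hfF (hfxy ▸ Sym2.mem_mk_left x y))
      have hyv : y ≠ v := by
        rintro rfl
        exact hfe (eq_of_leaf hleaf hfF (hfxy ▸ Sym2.mem_mk_right x y))
      simp only [hxv, hyv, if_false] at ih ⊢
      exact ih.tail ⟨f, ⟨hfF, hfe⟩, hfxy⟩

theorem Conn.reach_diff_leaf (hF : Conn ends F)
    (hleaf : {e' : E | e' ∈ F ∧ v ∈ ends e'} = {e}) (hu : u ≠ v) (hw : w ≠ v) :
    Reach ends (F \ {e}) u w := by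
  classical
  have hv := mem_ends_of_leaf hleaf
  simpa [hu, hw] using (hF u w).diff_leaf hleaf (Sym2.other_spec hv).symm

theorem IsFundCut.eq_incidence_of_leaf (hloop : ∀ f : E, ¬ (ends f).IsDiag)
    (hF : Conn ends F) (hleaf : {e' : E | e' ∈ F ∧ v ∈ ends e'} = {e})
    (hD : IsFundCut ends F e D) : D = {f | v ∈ ends f} := by
  obtain ⟨hDsub, -, hDmin⟩ := hD
  have hv := mem_ends_of_leaf hleaf
  have hFD : F \ {e} ⊆ Dᶜ := fun f ⟨hfF, hfe⟩ hfD =>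
    (hDsub hfD).elim hfe (· hfF)
  ext f
  rw [Set.mem_ofPred_eq]
  constructor
  · intro hfD
    by_contra hvf
    obtain ⟨x, y, hfxy⟩ : ∃ x y, ends f = s(x, y) := ⟨_, _, (Quot.out_eq (ends f)).symm⟩
    have hxv : x ≠ v := by rintro rfl; exact hvf (hfxy ▸ Sym2.mem_mk_left x y)
    have hyv : y ≠ v := by rintro rfl; exact hvf (hfxy ▸ Sym2.mem_mk_right x y)
    exact hDmin.not_reach_compl hfD hfxy ((hF.reach_diff_leaf hleaf hxv hyv).mono hFD)
  · intro hvf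
    by_contra hfD
    have hfb : ends f = s(v, Sym2.Mem.other hvf) := (Sym2.other_spec hvf).symm
    have hbv : Sym2.Mem.other hvf ≠ v := fun h => hloop f (by rw [hfb, h, Sym2.mk_isDiag_iff])
    have reach_v : ∀ z, Reach ends Dᶜ z v := fun z => by
      by_cases hz : z = v
      · exact hz ▸ .refl
      · exact ((hF.reach_diff_leaf hleaf hz hbv).mono hFD).tail
          ⟨f, hfD, hfb.trans Sym2.eq_swap⟩
    have : Nonempty V := ⟨v⟩
    exact hDmin.1.not_conn_compl fun z z' => (reach_v z).trans (reach_v z').symm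

end Leaf

end MG

theorem leaf_unique_exchange_general {V E : Type*}
    (ends : E → Sym2 V) (hloop : ∀ e : E, ¬ (ends e).IsDiag)
    (S T : Set E)
    (hS : MG.IsSpanningTree ends S)
    (v : V) (e : E)
    (hleaf : {e' : E | e' ∈ S ∧ v ∈ ends e'} = {e})
    (D : Set E) (hD : MG.IsFundCut ends S e D)
    (C : Set E) (hC : MG.IsFundCycle ends T e C) :
    Nat.card ↥(D ∩ C) = 2 := by
  obtain ⟨-, heC, -, -, hCdeg⟩ := hC
  have hDC : D ∩ C = {f | f ∈ C ∧ v ∈ ends f} := by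
    rw [hD.eq_incidence_of_leaf hloop hS.1 hleaf, Set.inter_comm]
    rfl
  rw [hDC]
  exact hCdeg v ⟨e, heC, MG.mem_ends_of_leaf hleaf⟩

/-- If `v` is a leaf of the spanning tree `S` of a bispanning graph, incident to the
unique `S`-edge `e`, then `e` admits a unique symmetric edge exchange:
`|D(S,e) ∩ C(T,e)| = 2`. -/
theorem leaf_unique_exchange {V E : Type*} [Finite V] [Finite E]
    (ends : E → Sym2 V) (hloop : ∀ e : E, ¬ (ends e).IsDiag)
    (S T : Set E) (hU : S ∪ T = Set.univ) (hd : Disjoint S T)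
    (hS : MG.IsSpanningTree ends S) (hT : MG.IsSpanningTree ends T)
    (v : V) (e : E) (he : e ∈ S)
    (hleaf : {e' : E | e' ∈ S ∧ v ∈ ends e'} = {e})
    (D : Set E) (hD : MG.IsFundCut ends S e D)
    (C : Set E) (hC : MG.IsFundCycle ends T e C) :
    Nat.card ↥(D ∩ C) = 2 :=
  leaf_unique_exchange_general ends hloop S T hS v e hleaf D hD C hC
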